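/- arXiv:1711.01707 — 2 statements merged into one kernel-verified Lean document; each statement's English description precedes it below -/
import Mathlib

section
/- Let σ > 0 and let b be a real number with 0 < b < π/(2√σ). Let h : ℝ → ℝ be differentiable on [0,b] with h(0) = 0 and h'(a) ≤ σ + h(a)² for all a ∈ [0,b]. Then h(a) ≤ √σ · tan(√σ · a) for all a ∈ [0,b]. -/
/-!
For `c > √σ` with `c * b < π / 2`, the function `c * tan (c * a)` solves `g' = c² + g²`, a
Riccati equation strictly above the one `h` satisfies. So `h` can never catch up with it from
below on `[0, b]`: at a first touching point `h'` would be at least `g'`, yet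
`h' ≤ σ + h² < c² + g²`. Letting `c` decrease to `√σ` gives the bound.
-/

open Real Set Filter Topology

theorem cos_mul_pos_of_mem_Icc {c b x : ℝ} (hc : 0 ≤ c) (hcb : c * b < π / 2)
    (hx : x ∈ Icc 0 b) : 0 < cos (c * x) := by
  apply cos_pos_of_mem_Ioo
  constructor
  · linarith [pi_pos, mul_nonneg hc hx.1]
  · linarith [mul_le_mul_of_nonneg_left hx.2 hc]

theorem hasDerivAt_mul_tan_mul {c x : ℝ} (hx : cos (c * x) ≠ 0) :
    HasDerivAt (fun y => c * tan (c * y)) (c ^ 2 + (c * tan (c * x)) ^ 2) x := by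
  have htan : HasDerivAt (fun y => c * tan (c * y)) (c * (1 / cos (c * x) ^ 2 * (c * 1))) x :=
    ((hasDerivAt_tan hx).comp x ((hasDerivAt_id x).const_mul c)).const_mul c
  refine htan.congr_deriv ?_
  rw [tan_eq_sin_div_cos]
  field_simp
  linear_combination -c ^ 2 * sin_sq_add_cos_sq (c * x)

theorem le_of_hasDerivWithinAt_Icc_of_deriv_lt {f f' g g' : ℝ → ℝ} {a b : ℝ}
    (hf : ∀ x ∈ Icc a b, HasDerivWithinAt f (f' x) (Icc a b) x)
    (hg : ∀ x ∈ Icc a b, HasDerivWithinAt g (g' x) (Icc a b) x) (ha : f a ≤ g a)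
    (bound : ∀ x ∈ Ico a b, f x = g x → f' x < g' x) : ∀ x ∈ Icc a b, f x ≤ g x := by
  have right {u u' : ℝ → ℝ} (hu : ∀ x ∈ Icc a b, HasDerivWithinAt u (u' x) (Icc a b) x) :
      ∀ x ∈ Ico a b, HasDerivWithinAt u (u' x) (Ici x) x := fun x hx =>
    (hu x (Ico_subset_Icc_self hx)).mono_of_mem_nhdsWithin (Icc_mem_nhdsGE_of_mem hx)
  exact fun x hx => image_le_of_deriv_right_lt_deriv_boundary'
    (fun y hy => (hf y hy).continuousWithinAt) (right hf) ha
    (fun y hy => (hg y hy).continuousWithinAt) (right hg) bound hx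

theorem le_mul_tan_mul_of_deriv_le_add_sq {σ c b : ℝ} {h h' : ℝ → ℝ} (hc : 0 ≤ c)
    (hσc : σ < c ^ 2) (hcb : c * b < π / 2)
    (hderiv : ∀ a ∈ Icc 0 b, HasDerivWithinAt h (h' a) (Icc 0 b) a) (h0 : h 0 ≤ 0)
    (hineq : ∀ a ∈ Icc 0 b, h' a ≤ σ + h a ^ 2) :
    ∀ a ∈ Icc 0 b, h a ≤ c * tan (c * a) := by
  refine le_of_hasDerivWithinAt_Icc_of_deriv_lt hderiv (fun x hx =>
    (hasDerivAt_mul_tan_mul (cos_mul_pos_of_mem_Icc hc hcb hx).ne').hasDerivWithinAt)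
    (by simpa using h0) fun x hx hx_eq => ?_
  have := hineq x (Ico_subset_Icc_self hx)
  rw [hx_eq] at this
  linarith

theorem riccati_comparison_general (σ b : ℝ) (hσ : 0 < σ)
    (hbπ : b < π / (2 * Real.sqrt σ))
    (h h' : ℝ → ℝ)
    (hderiv : ∀ a ∈ Icc (0 : ℝ) b, HasDerivWithinAt h (h' a) (Icc (0 : ℝ) b) a)
    (h0 : h 0 = 0)
    (hineq : ∀ a ∈ Icc (0 : ℝ) b, h' a ≤ σ + (h a) ^ 2) :
    ∀ a ∈ Icc (0 : ℝ) b, h a ≤ Real.sqrt σ * Real.tan (Real.sqrt σ * a) := by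
  intro a ha
  have hσb : √σ * b < π / 2 := by
    rw [lt_div_iff₀ (by positivity)] at hbπ
    linarith
  have hcos : cos (√σ * a) ≠ 0 := (cos_mul_pos_of_mem_Icc (sqrt_nonneg σ) hσb ha).ne'
  have hcont : ContinuousAt (fun c : ℝ => c * tan (c * a)) √σ :=
    continuousAt_id.mul <| ContinuousAt.comp (g := tan) (continuousAt_tan.2 hcos)
      (continuousAt_id.mul continuousAt_const)
  have hlim : Tendsto (fun c => c * tan (c * a)) (𝓝[>] √σ) (𝓝 (√σ * tan (√σ * a))) :=
    hcont.tendsto.mono_left nhdsWithin_le_nhds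
  have hnear : ∀ᶠ c in 𝓝[>] √σ, c * b < π / 2 := nhdsWithin_le_nhds <|
    (continuous_mul_const b).continuousAt.eventually_lt continuousAt_const hσb
  refine ge_of_tendsto hlim ?_
  filter_upwards [hnear, self_mem_nhdsWithin] with c hcb hc
  exact le_mul_tan_mul_of_deriv_le_add_sq ((sqrt_nonneg σ).trans hc.out.le)
    (lt_sq_of_sqrt_lt hc) hcb hderiv h0.le hineq a ha

/-- Riccati-type comparison. If `σ > 0`, `0 < b < π/(2√σ)`,
`h` is differentiable on `[0,b]` with `h 0 = 0` and `h' a ≤ σ + (h a)²` on `[0,b]`,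
then `h a ≤ √σ · tan (√σ · a)` on `[0,b]`. -/
theorem riccati_comparison (σ b : ℝ) (hσ : 0 < σ) (hb : 0 < b)
    (hbπ : b < π / (2 * Real.sqrt σ))
    (h h' : ℝ → ℝ)
    (hderiv : ∀ a ∈ Icc (0 : ℝ) b, HasDerivWithinAt h (h' a) (Icc (0 : ℝ) b) a)
    (h0 : h 0 = 0)
    (hineq : ∀ a ∈ Icc (0 : ℝ) b, h' a ≤ σ + (h a) ^ 2) :
    ∀ a ∈ Icc (0 : ℝ) b, h a ≤ Real.sqrt σ * Real.tan (Real.sqrt σ * a) :=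
  riccati_comparison_general σ b hσ hbπ h h' hderiv h0 hineq
end

section
/- Let α ∈ (0, 2π) and R > 0. Define for t > 0 the quantity I(t) = (1/(4πt)) · ∫₀^∞ ∫_{−π}^{π} (R + r·cos ψ − r·cos(αψ/(2π)))² dψ · e^{−r²/(4t)} · r dr. Then there exists a constant C > 0 such that for all t ∈ (0,1]: |I(t) − R² + (4R/α)·sin(α/2)·√(πt)| ≤ C·t. -/
open Real MeasureTheory intervalIntegral

/-- The squared transport cost `I(t)` of the explicit coupling on the cone over the circle
of length `α`, between the heat flows started at the vertex and at a point at distance `R`. -/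
noncomputable def coneCost (α R t : ℝ) : ℝ :=
  (1 / (4 * π * t)) *
    ∫ r in Set.Ioi (0 : ℝ),
      (∫ ψ in (-π)..π, (R + r * Real.cos ψ - r * Real.cos (α * ψ / (2 * π))) ^ 2) *
        (Real.exp (-(r ^ 2) / (4 * t)) * r)

/-!
Expanding the square, the angular integral is a quadratic polynomial in `r`: its coefficients are
`2πR²`, `-2R ∫ cos(αψ/2π) = -(8πR/α) sin(α/2)` and `K = ∫ (cos ψ - cos(αψ/2π))²`. Against the
weight `r e^{-r²/4t}` the monomials `1, r, r²` integrate to `2t`, `2t √(πt)` and `8t²`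
(Gamma-function moments), so `I(t) = R² - (4R/α) sin(α/2) √(πt) + (2K/π) t` exactly.
-/

open Set

section GaussianMoments

variable {t : ℝ}

theorem integral_Ioi_pow_mul_exp_neg_sq_div (ht : 0 < t) (n : ℕ) :
    ∫ r in Ioi (0 : ℝ), r ^ n * exp (-(r ^ 2) / (4 * t)) =
      Gamma ((n + 1) / 2) * √(4 * t) ^ (n + 1) / 2 := by
  have h := integral_rpow_mul_exp_neg_mul_rpow two_pos (neg_one_lt_zero.trans_le n.cast_nonneg)
    (inv_pos.2 (by positivity : 0 < 4 * t))
  rw [inv_rpow (by positivity), ← rpow_neg (by positivity), neg_div, neg_neg,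
    rpow_div_two_eq_sqrt _ (by positivity), ← Nat.cast_add_one, rpow_natCast] at h
  trans ∫ r in Ioi (0 : ℝ), r ^ (n : ℝ) * exp (-(4 * t)⁻¹ * r ^ (2 : ℝ))
  · refine setIntegral_congr_fun measurableSet_Ioi fun r _ => ?_
    rw [rpow_natCast, rpow_two, neg_mul, ← div_eq_inv_mul, neg_div]
  · rw [h]
    push_cast
    ring

theorem integrableOn_Ioi_pow_mul_exp_neg_sq_div (ht : 0 < t) (n : ℕ) :
    IntegrableOn (fun r : ℝ => r ^ n * exp (-(r ^ 2) / (4 * t))) (Ioi 0) := by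
  refine (integrableOn_rpow_mul_exp_neg_mul_sq (inv_pos.2 (by positivity : 0 < 4 * t))
    (neg_one_lt_zero.trans_le n.cast_nonneg)).congr_fun (fun r _ => ?_) measurableSet_Ioi
  simp only [rpow_natCast]
  rw [neg_mul, ← div_eq_inv_mul, neg_div]

theorem integral_Ioi_quadratic_mul_heatKernel (ht : 0 < t) (c₀ c₁ c₂ : ℝ) :
    ∫ r in Ioi (0 : ℝ), (c₀ + c₁ * r + c₂ * r ^ 2) * (exp (-(r ^ 2) / (4 * t)) * r) =
      2 * t * (c₀ + √(π * t) * c₁ + 4 * t * c₂) := by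
  set m : ℕ → ℝ → ℝ := fun n r => r ^ n * exp (-(r ^ 2) / (4 * t))
  have hm : ∀ n, Integrable (m n) (volume.restrict (Ioi 0)) :=
    integrableOn_Ioi_pow_mul_exp_neg_sq_div ht
  have hsplit : ∀ r : ℝ, (c₀ + c₁ * r + c₂ * r ^ 2) * (exp (-(r ^ 2) / (4 * t)) * r) =
      c₀ * m 1 r + c₁ * m 2 r + c₂ * m 3 r := fun r => by simp only [m]; ring
  have h₁₂ : Integrable (fun r => c₀ * m 1 r + c₁ * m 2 r) (volume.restrict (Ioi 0)) :=
    ((hm 1).const_mul _).add ((hm 2).const_mul _)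
  simp_rw [hsplit]
  rw [integral_add h₁₂ ((hm 3).const_mul _),
    integral_add ((hm 1).const_mul _) ((hm 2).const_mul _), MeasureTheory.integral_const_mul,
    MeasureTheory.integral_const_mul, MeasureTheory.integral_const_mul]
  simp only [m, integral_Ioi_pow_mul_exp_neg_sq_div ht]
  have hΓ : Gamma (3 / 2) = √π / 2 := by
    rw [show (3 / 2 : ℝ) = 1 / 2 + 1 by norm_num, Gamma_add_one (by norm_num), Gamma_one_half_eq]
    ring
  norm_num
  rw [hΓ, sqrt_mul pi_pos.le]
  linear_combination (2 * c₀ + 2 * √π * c₁ * √t + 8 * c₂ * (√t ^ 2 + t)) * sq_sqrt ht.le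

end GaussianMoments

theorem intervalIntegral_const_add_mul_sq {f : ℝ → ℝ} (hf : Continuous f) (a b c r : ℝ) :
    ∫ x in a..b, (c + r * f x) ^ 2 =
      (b - a) * c ^ 2 + 2 * c * r * (∫ x in a..b, f x) + r ^ 2 * ∫ x in a..b, f x ^ 2 := by
  have hexpand : ∀ x, (c + r * f x) ^ 2 = c ^ 2 + 2 * c * r * f x + r ^ 2 * f x ^ 2 :=
    fun x => by ring
  simp_rw [hexpand]
  rw [intervalIntegral.integral_add (Continuous.intervalIntegrable (by fun_prop) _ _)
      (Continuous.intervalIntegrable (by fun_prop) _ _),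
    intervalIntegral.integral_add intervalIntegrable_const
      (Continuous.intervalIntegrable (by fun_prop) _ _),
    intervalIntegral.integral_const, intervalIntegral.integral_const_mul,
    intervalIntegral.integral_const_mul, smul_eq_mul]

theorem integral_cos_mul_div_two_pi {α : ℝ} (hα : α ≠ 0) :
    ∫ ψ in (-π)..π, cos (α * ψ / (2 * π)) = 4 * π / α * sin (α / 2) := by
  have hc : α / (2 * π) ≠ 0 := div_ne_zero hα (by positivity)
  simp_rw [mul_div_right_comm α _ (2 * π)]
  rw [integral_comp_mul_left cos hc, integral_cos, mul_neg, sin_neg, smul_eq_mul,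
    show α / (2 * π) * π = α / 2 by field_simp]
  field_simp
  ring

noncomputable def coneAngularDefect (α : ℝ) : ℝ :=
  ∫ ψ in (-π)..π, (cos ψ - cos (α * ψ / (2 * π))) ^ 2

theorem integral_coneIntegrand {α : ℝ} (hα : α ≠ 0) (R r : ℝ) :
    ∫ ψ in (-π)..π, (R + r * cos ψ - r * cos (α * ψ / (2 * π))) ^ 2 =
      2 * π * R ^ 2 + (-(8 * π * R / α) * sin (α / 2)) * r + coneAngularDefect α * r ^ 2 := by
  have hf : Continuous fun ψ => cos ψ - cos (α * ψ / (2 * π)) := by fun_prop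
  simp_rw [add_sub_assoc, ← mul_sub]
  rw [intervalIntegral_const_add_mul_sq hf, intervalIntegral.integral_sub intervalIntegrable_cos
      ((by fun_prop : Continuous fun ψ => cos (α * ψ / (2 * π))).intervalIntegrable _ _),
    integral_cos, integral_cos_mul_div_two_pi hα, sin_neg, sin_pi, coneAngularDefect]
  ring

theorem coneCost_eq {α : ℝ} (hα : α ≠ 0) (R : ℝ) {t : ℝ} (ht : 0 < t) :
    coneCost α R t =
      R ^ 2 - 4 * R / α * sin (α / 2) * √(π * t) + 2 * coneAngularDefect α / π * t := by
  rw [coneCost]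
  simp_rw [integral_coneIntegrand hα]
  rw [integral_Ioi_quadratic_mul_heatKernel ht]
  field_simp
  ring

theorem coneCost_asymptotics_general (α R : ℝ)
    (hα : α ∈ Set.Ioo (0 : ℝ) (2 * π)) :
    ∃ C > (0 : ℝ), ∀ t ∈ Set.Ioc (0 : ℝ) 1,
      |coneCost α R t - R ^ 2 + (4 * R / α) * Real.sin (α / 2) * Real.sqrt (π * t)|
        ≤ C * t := by
  refine ⟨2 * |coneAngularDefect α| / π + 1, by positivity, fun t ht => ?_⟩
  have hremainder : coneCost α R t - R ^ 2 + 4 * R / α * sin (α / 2) * √(π * t) =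
      2 * coneAngularDefect α / π * t := by
    rw [coneCost_eq hα.1.ne' R ht.1]
    ring
  rw [hremainder, abs_mul, abs_div, abs_mul, abs_two, abs_of_pos pi_pos, abs_of_pos ht.1]
  exact mul_le_mul_of_nonneg_right (le_add_of_nonneg_right zero_le_one) ht.1.le

/-- For `α ∈ (0,2π)` and `R > 0` there is a constant `C > 0` such that for all
`t ∈ (0,1]`: `|I(t) − R² + (4R/α)·sin(α/2)·√(πt)| ≤ C·t`, i.e.
`I(t) = R² − 2R√(πt)·(2/α)·sin(α/2) + O(t)`. -/
theorem coneCost_asymptotics (α R : ℝ)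
    (hα : α ∈ Set.Ioo (0 : ℝ) (2 * π)) (hR : 0 < R) :
    ∃ C > (0 : ℝ), ∀ t ∈ Set.Ioc (0 : ℝ) 1,
      |coneCost α R t - R ^ 2 + (4 * R / α) * Real.sin (α / 2) * Real.sqrt (π * t)|
        ≤ C * t :=
  coneCost_asymptotics_general α R hα
end
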